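/- There exists a constant C > 0 such that the following holds. Let X be a measurable space, S ≥ 1 and B ≥ 1 natural numbers, and let ν be a probability measure on the batch space W := Fin S → (X × Bool × Bool). Let H be a nonempty countable set of measurable functions h : X → ℝ with 0 ≤ h x ≤ 1 for all x. Let μ̄ > 0, let N ≥ 1, and let G be a finite set of measurable functions g : X → ℝ with 0 ≤ g x ≤ 1, with card(G) ≤ N, such that for every h ∈ H there is g ∈ G with |h x − g x| ≤ μ̄/(2·S) for all x ∈ X. Then for every δ ∈ (0,1), the product measure ν^B on Fin B → W assigns measure at least 1 − δ to the set of tuples (w⁽¹⁾, …, w⁽ᴮ⁾) such that for every h ∈ H: ∫ constEO(h, w) dν(w) ≤ (1/B) ∑_{ℓ=1}^{B} constEO(h, w⁽ℓ⁾) + 2·(μ̄ + √(2·log N / B)) + C·√(log(1/δ)/B). -/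

import Mathlib

open MeasureTheory

/-- A Boolean attribute viewed as the real number `0` or `1`. -/
noncomputable def bval (b : Bool) : ℝ := if b then 1 else 0

/-- The false-positive-rate gap of a classifier `h` on a batch of `S`
samples `w i = (xᵢ, aᵢ, yᵢ)`. -/
noncomputable def fprB {X : Type*} {S : ℕ} (h : X → ℝ)
    (w : Fin S → X × Bool × Bool) : ℝ :=
  |(∑ i, h (w i).1 * (1 - bval (w i).2.2) * bval (w i).2.1) / (∑ i, bval (w i).2.1) -
    (∑ i, h (w i).1 * (1 - bval (w i).2.2) * (1 - bval (w i).2.1)) /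
      (∑ i, (1 - bval (w i).2.1))|

/-- The false-negative-rate gap of a classifier `h` on a batch of `S`
samples `w i = (xᵢ, aᵢ, yᵢ)`. -/
noncomputable def fnrB {X : Type*} {S : ℕ} (h : X → ℝ)
    (w : Fin S → X × Bool × Bool) : ℝ :=
  |(∑ i, (1 - h (w i).1) * bval (w i).2.2 * bval (w i).2.1) / (∑ i, bval (w i).2.1) -
    (∑ i, (1 - h (w i).1) * bval (w i).2.2 * (1 - bval (w i).2.1)) /
      (∑ i, (1 - bval (w i).2.1))|

/-- The equalized-odds constraint of a classifier `h` on a batch. -/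
noncomputable def constEO {X : Type*} {S : ℕ} (h : X → ℝ)
    (w : Fin S → X × Bool × Bool) : ℝ :=
  fprB h w + fnrB h w


/-!
Every `constEO g` takes values in `[0, 2]`, so Hoeffding's inequality for the `B` independent
batches bounds the probability that its empirical mean undershoots its expectation by `t` by
`exp (-B t² / 2)`; a union bound over the finite cover `G` makes this simultaneous for all
`g ∈ G` outside a set of probability `N exp (-B t² / 2) ≤ δ`. Both rates are differences of
weighted means of the scores, so `constEO` moves by at most `2ε` when the classifier moves by
`ε` uniformly; replacing `h` by a `μbar / (2 S)`-close `g ∈ G` thus costs `μbar` on each side.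
-/

open Real ProbabilityTheory

section WeightedMean

variable {ι : Type*} [Fintype ι]

/-- This is `0` when the total weight `∑ i, c i` vanishes. -/
noncomputable def weightedMean (c u : ι → ℝ) : ℝ := (∑ i, u i * c i) / ∑ i, c i

variable {c u v : ι → ℝ}

lemma weightedMean_add : weightedMean c (u + v) = weightedMean c u + weightedMean c v := by
  simp only [weightedMean, Pi.add_apply, add_mul, Finset.sum_add_distrib, add_div]

lemma weightedMean_sub : weightedMean c (u - v) = weightedMean c u - weightedMean c v := by
  simp only [weightedMean, Pi.sub_apply, sub_mul, Finset.sum_sub_distrib, sub_div]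

lemma weightedMean_nonneg (hc : 0 ≤ c) (hu : 0 ≤ u) : 0 ≤ weightedMean c u :=
  div_nonneg (Finset.sum_nonneg fun i _ => mul_nonneg (hu i) (hc i))
    (Finset.sum_nonneg fun i _ => hc i)

lemma weightedMean_mono (hc : 0 ≤ c) (huv : u ≤ v) : weightedMean c u ≤ weightedMean c v :=
  div_le_div_of_nonneg_right
    (Finset.sum_le_sum fun i _ => mul_le_mul_of_nonneg_right (huv i) (hc i))
    (Finset.sum_nonneg fun i _ => hc i)

lemma weightedMean_le_of_forall_le {ε : ℝ} (hc : 0 ≤ c) (hε : 0 ≤ ε) (hu : ∀ i, u i ≤ ε) :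
    weightedMean c u ≤ ε := by
  refine (weightedMean_mono hc hu).trans ?_
  rw [weightedMean, ← Finset.mul_sum, mul_div_assoc]
  exact mul_le_of_le_one_right hε (div_self_le_one _)

lemma abs_weightedMean_sub_le (hc : 0 ≤ c) :
    |weightedMean c u - weightedMean c v| ≤ weightedMean c fun i => |u i - v i| := by
  rw [abs_sub_le_iff, ← weightedMean_sub, ← weightedMean_sub]
  exact ⟨weightedMean_mono hc fun i => le_abs_self _,
    weightedMean_mono hc fun i => (le_abs_self _).trans (abs_sub_comm _ _).le⟩

end WeightedMean

section EqualizedOdds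

variable {ι : Type*} [Fintype ι]

/-- `constEO` in terms of weighted means: `a` are the group indicators, `y` the labels and `p`
the scores. -/
noncomputable def eqOddsGap (a y p : ι → ℝ) : ℝ :=
  |weightedMean a (p * (1 - y)) - weightedMean (1 - a) (p * (1 - y))| +
    |weightedMean a ((1 - p) * y) - weightedMean (1 - a) ((1 - p) * y)|

lemma constEO_eq_eqOddsGap {X : Type*} {S : ℕ} (h : X → ℝ) (w : Fin S → X × Bool × Bool) :
    constEO h w = eqOddsGap (fun i => bval (w i).2.1) (fun i => bval (w i).2.2)
      (fun i => h (w i).1) := rfl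

variable {a y p q : ι → ℝ}

lemma eqOddsGap_le_two (ha₀ : 0 ≤ a) (ha₁ : a ≤ 1) (hy₀ : 0 ≤ y) (hy₁ : y ≤ 1)
    (hp₀ : 0 ≤ p) (hp₁ : p ≤ 1) : eqOddsGap a y p ≤ 2 := by
  have hc : 0 ≤ 1 - a := sub_nonneg.2 ha₁
  have hfp₀ : 0 ≤ p * (1 - y) := mul_nonneg hp₀ (sub_nonneg.2 hy₁)
  have hfn₀ : 0 ≤ (1 - p) * y := mul_nonneg (sub_nonneg.2 hp₁) hy₀
  have hfp₁ : ∀ i, (p * (1 - y)) i ≤ 1 := fun i =>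
    mul_le_one₀ (hp₁ i) (sub_nonneg.2 (hy₁ i)) (sub_le_self _ (hy₀ i))
  have hfn₁ : ∀ i, ((1 - p) * y) i ≤ 1 := fun i =>
    mul_le_one₀ (sub_le_self _ (hp₀ i)) (hy₀ i) (hy₁ i)
  have h₁ := abs_sub_le_of_nonneg_of_le (weightedMean_nonneg ha₀ hfp₀)
    (weightedMean_le_of_forall_le ha₀ zero_le_one hfp₁) (weightedMean_nonneg hc hfp₀)
    (weightedMean_le_of_forall_le hc zero_le_one hfp₁)
  have h₂ := abs_sub_le_of_nonneg_of_le (weightedMean_nonneg ha₀ hfn₀)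
    (weightedMean_le_of_forall_le ha₀ zero_le_one hfn₁) (weightedMean_nonneg hc hfn₀)
    (weightedMean_le_of_forall_le hc zero_le_one hfn₁)
  rw [eqOddsGap]
  linarith

lemma abs_weightedMean_sub_add_abs_weightedMean_sub_le {c : ι → ℝ} {ε : ℝ} (hc : 0 ≤ c)
    (hε : 0 ≤ ε) (hy₀ : 0 ≤ y) (hy₁ : y ≤ 1) (hpq : ∀ i, |p i - q i| ≤ ε) :
    |weightedMean c (p * (1 - y)) - weightedMean c (q * (1 - y))| +
      |weightedMean c ((1 - p) * y) - weightedMean c ((1 - q) * y)| ≤ ε := by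
  have split : ∀ i, |(p * (1 - y)) i - (q * (1 - y)) i| + |((1 - p) * y) i - ((1 - q) * y) i|
      = |p i - q i| := fun i => by
    simp only [Pi.mul_apply, Pi.sub_apply, Pi.one_apply, ← sub_mul, sub_sub_sub_cancel_left,
      abs_mul, abs_sub_comm (q i), abs_of_nonneg (hy₀ i),
      abs_of_nonneg (sub_nonneg.2 (hy₁ i) : (0 : ℝ) ≤ 1 - y i)]
    ring
  calc _ ≤ (weightedMean c fun i => |(p * (1 - y)) i - (q * (1 - y)) i|) +
        weightedMean c fun i => |((1 - p) * y) i - ((1 - q) * y) i| :=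
        add_le_add (abs_weightedMean_sub_le hc) (abs_weightedMean_sub_le hc)
    _ = weightedMean c fun i => |p i - q i| := by
        rw [← weightedMean_add]
        simp only [Pi.add_def, split]
    _ ≤ ε := weightedMean_le_of_forall_le hc hε hpq

lemma abs_eqOddsGap_sub_le {ε : ℝ} (ha₀ : 0 ≤ a) (ha₁ : a ≤ 1) (hy₀ : 0 ≤ y) (hy₁ : y ≤ 1)
    (hε : 0 ≤ ε) (hpq : ∀ i, |p i - q i| ≤ ε) :
    |eqOddsGap a y p - eqOddsGap a y q| ≤ 2 * ε := by
  have abs_gap_sub : ∀ x y x' y' : ℝ, |(|x - y| - |x' - y'|)| ≤ |x - x'| + |y - y'| :=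
    fun x y x' y' => (abs_abs_sub_abs_le_abs_sub _ _).trans
      (by rw [sub_sub_sub_comm]; exact abs_sub _ _)
  have hpos := abs_weightedMean_sub_add_abs_weightedMean_sub_le ha₀ hε hy₀ hy₁ hpq
  have hneg := abs_weightedMean_sub_add_abs_weightedMean_sub_le (sub_nonneg.2 ha₁) hε hy₀ hy₁ hpq
  rw [eqOddsGap, eqOddsGap, add_sub_add_comm]
  refine (abs_add_le _ _).trans ?_
  linarith [abs_gap_sub (weightedMean a (p * (1 - y))) (weightedMean (1 - a) (p * (1 - y)))
      (weightedMean a (q * (1 - y))) (weightedMean (1 - a) (q * (1 - y))),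
    abs_gap_sub (weightedMean a ((1 - p) * y)) (weightedMean (1 - a) ((1 - p) * y))
      (weightedMean a ((1 - q) * y)) (weightedMean (1 - a) ((1 - q) * y))]

end EqualizedOdds

section ConstEO

variable {X : Type*} {S : ℕ}

lemma bval_nonneg (b : Bool) : 0 ≤ bval b := by cases b <;> simp [bval]

lemma bval_le_one (b : Bool) : bval b ≤ 1 := by cases b <;> simp [bval]

lemma constEO_mem_Icc {h : X → ℝ} (hh : ∀ x, 0 ≤ h x ∧ h x ≤ 1)
    (w : Fin S → X × Bool × Bool) : constEO h w ∈ Set.Icc 0 2 := by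
  rw [constEO_eq_eqOddsGap]
  exact ⟨add_nonneg (abs_nonneg _) (abs_nonneg _),
    eqOddsGap_le_two (fun _ => bval_nonneg _) (fun _ => bval_le_one _)
      (fun _ => bval_nonneg _) (fun _ => bval_le_one _) (fun _ => (hh _).1) (fun _ => (hh _).2)⟩

lemma abs_constEO_sub_le {h g : X → ℝ} {ε : ℝ} (hε : 0 ≤ ε) (hhg : ∀ x, |h x - g x| ≤ ε)
    (w : Fin S → X × Bool × Bool) : |constEO h w - constEO g w| ≤ 2 * ε := by
  rw [constEO_eq_eqOddsGap, constEO_eq_eqOddsGap]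
  exact abs_eqOddsGap_sub_le (fun _ => bval_nonneg _) (fun _ => bval_le_one _)
    (fun _ => bval_nonneg _) (fun _ => bval_le_one _) hε fun _ => hhg _

@[fun_prop]
lemma measurable_bval : Measurable bval := .of_discrete

lemma measurable_constEO [MeasurableSpace X] {h : X → ℝ} (hh : Measurable h) :
    Measurable (constEO (S := S) h) := by
  unfold constEO fprB fnrB
  fun_prop

lemma integrable_constEO [MeasurableSpace X] (ν : Measure (Fin S → X × Bool × Bool))
    [IsFiniteMeasure ν] {h : X → ℝ} (hm : Measurable h) (hh : ∀ x, 0 ≤ h x ∧ h x ≤ 1) :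
    Integrable (constEO h) ν :=
  .of_mem_Icc 0 2 (measurable_constEO hm).aemeasurable (ae_of_all _ (constEO_mem_Icc hh))

end ConstEO

section Hoeffding

variable {Ω : Type*} [MeasurableSpace Ω] (ν : Measure Ω) [IsProbabilityMeasure ν] {B : ℕ}

lemma measureReal_pi_mean_add_le_integral_le (hB : 0 < B) {f : Ω → ℝ} (hf : Measurable f)
    {a b : ℝ} (hfab : ∀ ω, f ω ∈ Set.Icc a b) {t : ℝ} (ht : 0 ≤ t) :
    (Measure.pi fun _ : Fin B => ν).real
        {ws | 1 / (B : ℝ) * ∑ ℓ, f (ws ℓ) + t ≤ ∫ ω, f ω ∂ν} ≤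
      exp (-2 * B * t ^ 2 / (b - a) ^ 2) := by
  set dev : Ω → ℝ := fun ω => ∫ ω', f ω' ∂ν - f ω
  have hdev : HasSubgaussianMGF dev ((‖b - a‖₊ / 2) ^ 2) ν := by
    convert (hasSubgaussianMGF_of_mem_Icc (μ := ν) hf.aemeasurable (ae_of_all _ hfab)).neg
      using 1
    funext ω
    simp [dev]
  have hdev_pi : ∀ ℓ : Fin B, HasSubgaussianMGF (fun ws => dev (ws ℓ)) ((‖b - a‖₊ / 2) ^ 2)
      (Measure.pi fun _ => ν) := fun ℓ =>
    HasSubgaussianMGF.of_map (X := dev) (Y := fun ws : Fin B → Ω => ws ℓ)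
      (measurable_pi_apply ℓ).aemeasurable
      (by rwa [(measurePreserving_eval _ ℓ).map_eq])
  have hindep : iIndepFun (fun ℓ ws => dev (ws ℓ)) (Measure.pi fun _ : Fin B => ν) :=
    iIndepFun_pi fun _ => (measurable_const.sub hf).aemeasurable
  have hoeffding := HasSubgaussianMGF.measure_sum_ge_le_of_iIndepFun hindep (s := Finset.univ)
    (fun ℓ _ => hdev_pi ℓ) (ε := B * t) (by positivity)
  have hB' : (0 : ℝ) < B := Nat.cast_pos.2 hB
  convert hoeffding using 2
  · ext ws
    have hscale : B * ∫ ω, f ω ∂ν - ∑ ℓ, f (ws ℓ) - B * t =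
        B * (∫ ω, f ω ∂ν - (1 / B * ∑ ℓ, f (ws ℓ) + t)) := by
      field_simp
      ring
    simp only [Set.mem_ofPred_eq, dev, Finset.sum_sub_distrib, Finset.sum_const,
      Finset.card_univ, Fintype.card_fin, nsmul_eq_mul]
    rw [← sub_nonneg, ← sub_nonneg (b := B * t), hscale, mul_nonneg_iff_of_pos_left hB']
  · push_cast
    rw [Finset.sum_const, Finset.card_univ, Fintype.card_fin, nsmul_eq_mul, Real.norm_eq_abs,
      div_pow, sq_abs]
    field_simp

lemma measureReal_pi_exists_mean_add_le_integral_le {κ : Type*} (s : Finset κ) (hB : 0 < B)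
    {f : κ → Ω → ℝ} (hf : ∀ i ∈ s, Measurable (f i)) {a b : ℝ}
    (hfab : ∀ i ∈ s, ∀ ω, f i ω ∈ Set.Icc a b) {t : ℝ} (ht : 0 ≤ t) :
    (Measure.pi fun _ : Fin B => ν).real
        {ws | ∃ i ∈ s, 1 / (B : ℝ) * ∑ ℓ, f i (ws ℓ) + t ≤ ∫ ω, f i ω ∂ν} ≤
      s.card * exp (-2 * B * t ^ 2 / (b - a) ^ 2) := by
  have hunion : {ws : Fin B → Ω | ∃ i ∈ s, 1 / (B : ℝ) * ∑ ℓ, f i (ws ℓ) + t ≤ ∫ ω, f i ω ∂ν} =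
      ⋃ i ∈ s, {ws | 1 / (B : ℝ) * ∑ ℓ, f i (ws ℓ) + t ≤ ∫ ω, f i ω ∂ν} := by
    ext ws
    simp
  rw [hunion, ← nsmul_eq_mul, ← Finset.sum_const]
  exact (measureReal_biUnion_finset_le _ _).trans (Finset.sum_le_sum fun i hi =>
    measureReal_pi_mean_add_le_integral_le ν hB (hf i hi) (hfab i hi) ht)

lemma integral_le_mean_add_of_abs_sub_le (hB : 0 < B) {F G : Ω → ℝ} (hF : Integrable F ν)
    (hG : Integrable G ν) {m t : ℝ} (hFG : ∀ ω, |F ω - G ω| ≤ m) {ws : Fin B → Ω}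
    (hGws : ∫ ω, G ω ∂ν ≤ 1 / (B : ℝ) * ∑ ℓ, G (ws ℓ) + t) :
    ∫ ω, F ω ∂ν ≤ 1 / (B : ℝ) * ∑ ℓ, F (ws ℓ) + 2 * m + t := by
  have hint : ∫ ω, F ω ∂ν ≤ ∫ ω, G ω ∂ν + m := by
    calc ∫ ω, F ω ∂ν ≤ ∫ ω, (G ω + m) ∂ν :=
          integral_mono hF (hG.add (integrable_const m)) fun ω => by
            linarith [(abs_le.1 (hFG ω)).2]
      _ = ∫ ω, G ω ∂ν + m := by simp [integral_add hG (integrable_const m)]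
  have hsum : ∑ ℓ, G (ws ℓ) ≤ ∑ ℓ, F (ws ℓ) + B * m := by
    simpa [Finset.sum_add_distrib] using Finset.sum_le_sum fun ℓ (_ : ℓ ∈ Finset.univ) =>
      show G (ws ℓ) ≤ F (ws ℓ) + m by linarith [(abs_le.1 (hFG (ws ℓ))).1]
  have hmean : 1 / (B : ℝ) * ∑ ℓ, G (ws ℓ) ≤ 1 / (B : ℝ) * ∑ ℓ, F (ws ℓ) + m := by
    have hB' : (0 : ℝ) < B := Nat.cast_pos.2 hB
    calc 1 / (B : ℝ) * ∑ ℓ, G (ws ℓ) ≤ 1 / (B : ℝ) * (∑ ℓ, F (ws ℓ) + B * m) := by gcongr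
      _ = 1 / (B : ℝ) * ∑ ℓ, F (ws ℓ) + m := by field_simp
  linarith

end Hoeffding

lemma ofReal_one_sub_le_measure_of_compl_subset {α : Type*} [MeasurableSpace α] {μ : Measure α}
    [IsProbabilityMeasure μ] {s t : Set α} {δ : ℝ} (hs : μ.real s ≤ δ) (hst : sᶜ ⊆ t) :
    ENNReal.ofReal (1 - δ) ≤ μ t := by
  rw [ENNReal.ofReal_le_iff_le_toReal (measure_ne_top _ _)]
  change 1 - δ ≤ μ.real t
  have hcover := measureReal_union_le (μ := μ) s sᶜ
  rw [Set.union_compl_self, probReal_univ] at hcover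
  linarith [measureReal_mono (μ := μ) hst]

lemma natCast_mul_exp_neg_le {N B : ℕ} (hN : 1 ≤ N) (hB : 0 < B) {δ : ℝ} (hδ₀ : 0 < δ)
    (hδ₁ : δ < 1) :
    (N : ℝ) * exp (-(B * (2 * √(2 * log N / B) + 2 * √(log (1 / δ) / B)) ^ 2 / 2)) ≤ δ := by
  have hB' : (0 : ℝ) < B := Nat.cast_pos.2 hB
  have hlogN : 0 ≤ log N := log_nonneg (by exact_mod_cast hN)
  have hlogδ : 0 ≤ log (1 / δ) := log_nonneg (one_le_one_div hδ₀ hδ₁.le)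
  have hsqN : B * √(2 * log N / B) ^ 2 = 2 * log N := by
    rw [sq_sqrt (by positivity)]; field_simp
  have hsqδ : B * √(log (1 / δ) / B) ^ 2 = log (1 / δ) := by
    rw [sq_sqrt (by positivity)]; field_simp
  have hexponent : log N + log (1 / δ) ≤
      B * (2 * √(2 * log N / B) + 2 * √(log (1 / δ) / B)) ^ 2 / 2 := by
    nlinarith [mul_nonneg hB'.le (mul_nonneg (sqrt_nonneg (2 * log N / B))
      (sqrt_nonneg (log (1 / δ) / B)))]
  calc (N : ℝ) * exp (-(B * (2 * √(2 * log N / B) + 2 * √(log (1 / δ) / B)) ^ 2 / 2))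
      ≤ N * exp (-(log N + log (1 / δ))) := by gcongr
    _ = δ := by
      rw [neg_add, exp_add, exp_neg, exp_neg, exp_log (by positivity), exp_log (by positivity)]
      field_simp

theorem eo_generalization_bound :
    ∃ C : ℝ, 0 < C ∧
      ∀ (X : Type) [MeasurableSpace X], ∀ (S B : ℕ), 1 ≤ S → 1 ≤ B →
      ∀ (ν : Measure (Fin S → X × Bool × Bool)) [IsProbabilityMeasure ν],
      ∀ (H : Set (X → ℝ)), H.Nonempty → H.Countable →
        (∀ h ∈ H, Measurable h) → (∀ h ∈ H, ∀ x, 0 ≤ h x ∧ h x ≤ 1) →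
      ∀ (μbar : ℝ), 0 < μbar →
      ∀ (N : ℕ), 1 ≤ N →
      ∀ (G : Finset (X → ℝ)),
        (∀ g ∈ G, Measurable g) → (∀ g ∈ G, ∀ x, 0 ≤ g x ∧ g x ≤ 1) →
        G.card ≤ N →
        (∀ h ∈ H, ∃ g ∈ G, ∀ x, |h x - g x| ≤ μbar / (2 * (S : ℝ))) →
      ∀ δ : ℝ, 0 < δ → δ < 1 →
        ENNReal.ofReal (1 - δ) ≤
          (Measure.pi fun _ : Fin B => ν)
            {ws : Fin B → (Fin S → X × Bool × Bool) |
              ∀ h ∈ H,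
                ∫ w, constEO h w ∂ν ≤
                  (1 / (B : ℝ)) * ∑ ℓ : Fin B, constEO h (ws ℓ)
                    + 2 * (μbar + Real.sqrt (2 * Real.log (N : ℝ) / (B : ℝ)))
                    + C * Real.sqrt (Real.log (1 / δ) / (B : ℝ))} := by
  refine ⟨2, two_pos, ?_⟩
  intro X _ S B hS hB ν _ H _ _ hHm hHb μbar hμbar N hN G hGm hGb hGN hcover δ hδ₀ hδ₁
  set t := 2 * √(2 * log N / B) + 2 * √(log (1 / δ) / B)
  have hbad : (Measure.pi fun _ : Fin B => ν).real
      {ws | ∃ g ∈ G, 1 / (B : ℝ) * ∑ ℓ, constEO g (ws ℓ) + t ≤ ∫ w, constEO g w ∂ν} ≤ δ :=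
    calc _ ≤ G.card * exp (-2 * B * t ^ 2 / (2 - 0) ^ 2) :=
          measureReal_pi_exists_mean_add_le_integral_le ν G hB
            (fun g hg => measurable_constEO (hGm g hg)) (fun g hg => constEO_mem_Icc (hGb g hg))
            (by positivity)
      _ ≤ N * exp (-(B * t ^ 2 / 2)) := by
          rw [show -2 * (B : ℝ) * t ^ 2 / (2 - 0) ^ 2 = -(B * t ^ 2 / 2) by ring]
          gcongr
      _ ≤ δ := natCast_mul_exp_neg_le hN hB hδ₀ hδ₁
  refine ofReal_one_sub_le_measure_of_compl_subset hbad fun ws hws h hh => ?_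
  obtain ⟨g, hg, hhg⟩ := hcover h hh
  have hε : 2 * (μbar / (2 * S)) ≤ μbar := by
    rw [← mul_div_assoc, mul_div_mul_left _ _ two_ne_zero]
    exact div_le_self hμbar.le (by exact_mod_cast hS)
  have hclose : ∀ w : Fin S → X × Bool × Bool, |constEO h w - constEO g w| ≤ μbar := fun w =>
    (abs_constEO_sub_le (by positivity) hhg w).trans hε
  have hgws : ∫ w, constEO g w ∂ν ≤ 1 / (B : ℝ) * ∑ ℓ, constEO g (ws ℓ) + t :=
    le_of_not_ge fun hle => hws ⟨g, hg, hle⟩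
  have hh_le := integral_le_mean_add_of_abs_sub_le ν hB (integrable_constEO ν (hHm h hh) (hHb h hh))
    (integrable_constEO ν (hGm g hg) (hGb g hg)) hclose hgws
  linarith
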